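/- Let m > 1, δ > 0, U₀, V₀, d₁, d₂ > 0 with d₁ < d₂, and let ι = ι(U₀, δV₀) be the unique positive constant with 2U₀/(δV₀) = ι ∫₀^ι e^{(ι²−s²)/4} ds. For each k > 0 let (u_{k,δ}, v_{k,δ}) be nonnegative classical solutions of the scaled system ∂_t u_{k,δ} = ∂_{xx} u_{k,δ} − δk u_{k,δ} v_{k,δ}, ∂_t v_{k,δ} = −k u_{k,δ} v_{k,δ} on (d₁,d₂) × (0,T), with u_{k,δ}(x,0) = 0, v_{k,δ}(x,0) = V₀, 0 ≤ u_{k,δ} ≤ U₀, so that v_{k,δ}(x,t) = V₀ exp(−k z_{k,δ}(x,t)) with z_{k,δ}(x,t) := ∫₀ᵗ u_{k,δ}(x,s) ds; assume that u_{k,δ}(x,t) → f^{(U₀,δV₀)}(x/√t) and z_{k,δ} → ∫₀ᵗ f^{(U₀,δV₀)}(x/√s) ds uniformly on [d₁,d₂] × [0, d₂² ι^{−2}] as k → ∞. Fix constants λ₁, λ₂ > 0. Then there exists K > 0 such that for all k > K, k u_{k,δ}^m v_{k,δ} − λ₁ k u_{k,δ} v_{k,δ} − λ₂ u_{k,δ}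 ≤ 0 at every point (x,t) ∈ (d₁,d₂) × (0, d₂² ι^{−2}). -/

import Mathlib

/-! Where `u_k` is small, `u_k^m ≤ λ₁ u_k` absorbs the first term into the second. Where it is
not, the limit profile is bounded below at `(x,t)`, hence so is `z_k`, and `v_k = V₀ e^{-k z_k}`
is exponentially small, which beats the factor `k`. -/

open Set Filter Real MeasureTheory Topology

noncomputable section

/-- The self-similar profile `f^{(U₀,V₀)}` associated with a constant `ι > 0`:
`f(η) = U₀ (1 − (∫₀^η e^{−s²/4} ds)/(∫₀^ι e^{−s²/4} ds))` for `η ≤ ι`, and `0` for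
`η > ι`. -/
def profile (U₀ ι η : ℝ) : ℝ :=
  if η ≤ ι then
    U₀ * (1 - (∫ s in (0:ℝ)..η, Real.exp (-s^2/4)) / (∫ s in (0:ℝ)..ι, Real.exp (-s^2/4)))
  else 0

def gaussPrimitive (η : ℝ) : ℝ := ∫ s in (0:ℝ)..η, Real.exp (-s^2/4)

theorem profile_eq (U₀ ι η : ℝ) :
    profile U₀ ι η = if η ≤ ι then U₀ * (1 - gaussPrimitive η / gaussPrimitive ι) else 0 :=
  rfl

theorem intervalIntegrable_exp_neg_sq_div_four (a b : ℝ) :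
    IntervalIntegrable (fun s : ℝ => Real.exp (-s^2/4)) volume a b :=
  (by fun_prop : Continuous fun s : ℝ => Real.exp (-s^2/4)).intervalIntegrable a b

theorem gaussPrimitive_zero : gaussPrimitive 0 = 0 :=
  intervalIntegral.integral_same

theorem continuous_gaussPrimitive : Continuous gaussPrimitive :=
  intervalIntegral.continuous_primitive intervalIntegrable_exp_neg_sq_div_four 0

theorem gaussPrimitive_strictMono : StrictMono gaussPrimitive := by
  intro a b hab
  have hsub : gaussPrimitive b - gaussPrimitive a = ∫ s in a..b, Real.exp (-s^2/4) :=
    intervalIntegral.integral_interval_sub_left (intervalIntegrable_exp_neg_sq_div_four 0 b)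
      (intervalIntegrable_exp_neg_sq_div_four 0 a)
  have hpos : 0 < ∫ s in a..b, Real.exp (-s^2/4) :=
    intervalIntegral.intervalIntegral_pos_of_pos_on (intervalIntegrable_exp_neg_sq_div_four a b)
      (fun _ _ => Real.exp_pos _) hab
  linarith

theorem gaussPrimitive_pos {η : ℝ} (hη : 0 < η) : 0 < gaussPrimitive η :=
  gaussPrimitive_zero ▸ gaussPrimitive_strictMono hη

section profile

variable {U₀ ι : ℝ}

theorem profile_self (hι : 0 < ι) : profile U₀ ι ι = 0 := by
  simp [profile_eq, (gaussPrimitive_pos hι).ne']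

theorem profile_zero (hι : 0 ≤ ι) : profile U₀ ι 0 = U₀ := by
  simp [profile_eq, hι, gaussPrimitive_zero]

theorem continuous_profile (U₀ : ℝ) (hι : 0 < ι) : Continuous (profile U₀ ι) := by
  have hG := continuous_gaussPrimitive
  show Continuous fun η => if η ≤ ι then U₀ * (1 - gaussPrimitive η / gaussPrimitive ι) else 0
  refine Continuous.if_le (by fun_prop) continuous_const continuous_id continuous_const ?_
  rintro η rfl
  simp [(gaussPrimitive_pos hι).ne']

theorem profile_antitone (hU₀ : 0 ≤ U₀) (hι : 0 < ι) : Antitone (profile U₀ ι) := by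
  have hG := gaussPrimitive_pos hι
  intro a b hab
  simp only [profile_eq]
  split_ifs with hb ha ha
  · gcongr
    exact gaussPrimitive_strictMono.monotone hab
  · exact absurd (hab.trans hb) ha
  · exact mul_nonneg hU₀
      (sub_nonneg.2 ((div_le_one hG).2 (gaussPrimitive_strictMono.monotone ha)))
  · exact le_rfl

theorem profile_nonneg (hU₀ : 0 ≤ U₀) (hι : 0 < ι) (η : ℝ) : 0 ≤ profile U₀ ι η := by
  by_cases hη : η ≤ ι
  · exact (profile_self hι).symm.trans_le (profile_antitone hU₀ hι hη)
  · simp [profile_eq, hη]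

theorem profile_le (hU₀ : 0 ≤ U₀) (hι : 0 < ι) {η : ℝ} (hη : 0 ≤ η) : profile U₀ ι η ≤ U₀ :=
  (profile_antitone hU₀ hι hη).trans_eq (profile_zero hι.le)

theorem profile_pos (hU₀ : 0 < U₀) (hι : 0 < ι) {η : ℝ} (hη : η < ι) : 0 < profile U₀ ι η := by
  rw [profile_eq, if_pos hη.le]
  exact mul_pos hU₀
    (sub_pos.2 ((div_lt_one (gaussPrimitive_pos hι)).2 (gaussPrimitive_strictMono hη)))

theorem exists_mem_Ioo_profile_lt (hι : 0 < ι) {ε : ℝ} (hε : 0 < ε) :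
    ∃ η ∈ Ioo 0 ι, profile U₀ ι η < ε := by
  have hlt : ∀ᶠ η in 𝓝 ι, profile U₀ ι η < ε :=
    (continuous_profile U₀ hι).continuousAt.eventually_lt continuousAt_const
      ((profile_self hι).trans_lt hε)
  exact ((eventually_mem_set.2 (Ioo_mem_nhdsLT hι)).and (nhdsWithin_le_nhds hlt)).exists

end profile

theorem div_sqrt_le_iff {x η t : ℝ} (hx : 0 ≤ x) (hη : 0 < η) (ht : 0 < t) :
    x / √t ≤ η ↔ x^2 / η^2 ≤ t := by
  rw [div_le_iff₀ (sqrt_pos.2 ht), div_le_iff₀ (by positivity),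
    ← pow_le_pow_iff_left₀ hx (by positivity) two_ne_zero, mul_pow, sq_sqrt ht.le, mul_comm]

section integral

variable {U₀ ι : ℝ}

theorem intervalIntegrable_profile_div_sqrt (hU₀ : 0 ≤ U₀) (hι : 0 < ι) {x : ℝ} (hx : 0 ≤ x)
    (a b : ℝ) : IntervalIntegrable (fun s => profile U₀ ι (x / √s)) volume a b := by
  refine IntervalIntegrable.mono_fun' (g := fun _ => U₀) intervalIntegrable_const
    ((continuous_profile U₀ hι).measurable.comp
      (measurable_const.div continuous_sqrt.measurable)).aestronglyMeasurable
    (Eventually.of_forall fun s => ?_)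
  show ‖profile U₀ ι (x / √s)‖ ≤ U₀
  rw [norm_of_nonneg (profile_nonneg hU₀ hι _)]
  exact profile_le hU₀ hι (by positivity)

theorem sub_mul_profile_le_integral (hU₀ : 0 ≤ U₀) (hι : 0 < ι) {x η t : ℝ} (hx : 0 < x)
    (hη : 0 < η) (ht : x^2 / η^2 ≤ t) :
    (t - x^2 / η^2) * profile U₀ ι η ≤ ∫ s in (0:ℝ)..t, profile U₀ ι (x / √s) := by
  set a := x^2 / η^2
  have ha : 0 < a := by positivity
  have hint := intervalIntegrable_profile_div_sqrt hU₀ hι hx.le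
  have hsplit := intervalIntegral.integral_add_adjacent_intervals (hint 0 a) (hint a t)
  have hhead : 0 ≤ ∫ s in (0:ℝ)..a, profile U₀ ι (x / √s) :=
    intervalIntegral.integral_nonneg ha.le fun s _ => profile_nonneg hU₀ hι _
  have htail : ∫ _ in a..t, profile U₀ ι η ≤ ∫ s in a..t, profile U₀ ι (x / √s) :=
    intervalIntegral.integral_mono_on ht intervalIntegrable_const (hint a t) fun s hs =>
      profile_antitone hU₀ hι ((div_sqrt_le_iff hx.le hη (ha.trans_le hs.1)).2 hs.1)
  rw [intervalIntegral.integral_const, smul_eq_mul] at htail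
  linarith

/-- Points where the profile is at least `ε` have `x/√t` bounded away from `ι`, so the profile
stays positive on a time interval of length proportional to `x²` before `t`. -/
theorem exists_pos_le_integral_profile (hU₀ : 0 < U₀) (hι : 0 < ι) {d ε : ℝ} (hd : 0 < d)
    (hε : 0 < ε) : ∃ c > 0, ∀ x ≥ d, ∀ t > 0, ε ≤ profile U₀ ι (x / √t) →
      c ≤ ∫ s in (0:ℝ)..t, profile U₀ ι (x / √s) := by
  obtain ⟨η₁, ⟨hη₁, hη₁ι⟩, hprof⟩ := exists_mem_Ioo_profile_lt (U₀ := U₀) hι hε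
  obtain ⟨η₂, h12, h2ι⟩ := exists_between hη₁ι
  have hgap : 0 < (η₁^2)⁻¹ - (η₂^2)⁻¹ :=
    sub_pos.2 (inv_strictAnti₀ (by positivity) (pow_lt_pow_left₀ h12 hη₁.le two_ne_zero))
  have hprof₂ : 0 < profile U₀ ι η₂ := profile_pos hU₀ hι h2ι
  refine ⟨d^2 * ((η₁^2)⁻¹ - (η₂^2)⁻¹) * profile U₀ ι η₂, by positivity, ?_⟩
  intro x hx t ht hεx
  have hx0 : 0 < x := hd.trans_le hx
  have ht₁ : x^2 / η₁^2 ≤ t := (div_sqrt_le_iff hx0.le hη₁ ht).1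
    ((profile_antitone hU₀.le hι).reflect_lt (hprof.trans_le hεx)).le
  have ht₂ : x^2 / η₂^2 ≤ t := le_trans (by gcongr) ht₁
  calc d^2 * ((η₁^2)⁻¹ - (η₂^2)⁻¹) * profile U₀ ι η₂
      ≤ (x^2 / η₁^2 - x^2 / η₂^2) * profile U₀ ι η₂ := by
        rw [div_eq_mul_inv, div_eq_mul_inv, ← mul_sub]
        gcongr
    _ ≤ (t - x^2 / η₂^2) * profile U₀ ι η₂ := by gcongr
    _ ≤ ∫ s in (0:ℝ)..t, profile U₀ ι (x / √s) :=
        sub_mul_profile_le_integral hU₀.le hι hx0 (by linarith) ht₂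

end integral

section reaction

variable {m k u v lam₁ lam₂ : ℝ}

theorem rpow_le_rpow_sub_one_mul {c : ℝ} (hu : 0 ≤ u) (huc : u ≤ c) (hm : 1 ≤ m) :
    u ^ m ≤ c ^ (m - 1) * u :=
  calc u ^ m = u ^ (m - 1) * u := by rw [← rpow_add_one' hu (by linarith), sub_add_cancel]
    _ ≤ c ^ (m - 1) * u := by gcongr

theorem reaction_nonpos_of_le_rpow (hm : 1 < m) (hk : 0 ≤ k) (hu : 0 ≤ u) (hv : 0 ≤ v)
    (hlam₁ : 0 ≤ lam₁) (hlam₂ : 0 ≤ lam₂) (h : u ≤ lam₁ ^ (m - 1)⁻¹) :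
    k * u ^ m * v - lam₁ * (k * u * v) - lam₂ * u ≤ 0 := by
  have hum : u ^ m ≤ lam₁ * u := by
    simpa [rpow_inv_rpow hlam₁ (sub_pos.2 hm).ne'] using rpow_le_rpow_sub_one_mul hu h hm.le
  have : k * u ^ m * v ≤ lam₁ * (k * u * v) :=
    calc k * u ^ m * v ≤ k * (lam₁ * u) * v := by gcongr
      _ = lam₁ * (k * u * v) := by ring
  linarith [mul_nonneg hlam₂ hu]

theorem reaction_nonpos_of_le_exp {U₀ V₀ c : ℝ} (hm : 1 ≤ m) (hk : 0 ≤ k) (hu : 0 ≤ u)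
    (huU : u ≤ U₀) (hv : 0 ≤ v) (hvV : v ≤ V₀ * exp (-(k * c))) (hlam₁ : 0 ≤ lam₁)
    (hdecay : U₀ ^ (m - 1) * V₀ * (k * exp (-(k * c))) ≤ lam₂) :
    k * u ^ m * v - lam₁ * (k * u * v) - lam₂ * u ≤ 0 := by
  have : k * u ^ m * v ≤ lam₂ * u :=
    calc k * u ^ m * v ≤ k * (U₀ ^ (m - 1) * u) * (V₀ * exp (-(k * c))) := by
          have : 0 ≤ U₀ ^ (m - 1) := rpow_nonneg (hu.trans huU) _
          gcongr
          exact rpow_le_rpow_sub_one_mul hu huU hm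
      _ = U₀ ^ (m - 1) * V₀ * (k * exp (-(k * c))) * u := by ring
      _ ≤ lam₂ * u := by gcongr
  linarith [mul_nonneg hlam₁ (mul_nonneg (mul_nonneg hk hu) hv)]

end reaction

theorem eventually_mul_exp_neg_mul_le {c : ℝ} (hc : 0 < c) (C : ℝ) {lam : ℝ} (hlam : 0 < lam) :
    ∀ᶠ k in atTop, C * (k * exp (-(k * c))) ≤ lam := by
  have h : Tendsto (fun k : ℝ => C * (k * exp (-(k * c)))) atTop (𝓝 (C * 0)) := by
    refine (tendsto_rpow_mul_exp_neg_mul_atTop_nhds_zero 1 c hc).const_mul C |>.congr' ?_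
    filter_upwards with k
    rw [rpow_one, neg_mul, mul_comm c]
  rw [mul_zero] at h
  exact h.eventually (ge_mem_nhds hlam)

theorem exists_pos_forall_gt_of_eventually_atTop {P : ℝ → Prop} (h : ∀ᶠ k in atTop, P k) :
    ∃ K > (0:ℝ), ∀ k > K, P k := by
  obtain ⟨K, hK⟩ := eventually_atTop.1 h
  exact ⟨max K 1, by positivity, fun k hk => hK k ((le_max_left _ _).trans hk.le)⟩

theorem reaction_term_inequality_general
    (m U₀ V₀ d₁ d₂ ι T lam₁ lam₂ : ℝ)
    (hm : 1 < m) (hU₀ : 0 < U₀) (hV₀ : 0 < V₀)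
    (hd₁ : 0 < d₁) (hι : 0 < ι)
    (hT : d₂^2 / ι^2 ≤ T)
    (hlam₁ : 0 < lam₁) (hlam₂ : 0 < lam₂)
    (u v : ℝ → ℝ → ℝ → ℝ)
    -- nonnegative classical solutions of the scaled system with the stated data
    (hbounds : ∀ k > (0:ℝ), ∀ x ∈ Icc d₁ d₂, ∀ t ∈ Icc 0 T,
      0 ≤ u k x t ∧ u k x t ≤ U₀ ∧ 0 ≤ v k x t)
    -- explicit integration of the `v`-equation
    (hv_formula : ∀ k > (0:ℝ), ∀ x ∈ Icc d₁ d₂, ∀ t ∈ Icc 0 T,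
      v k x t = V₀ * Real.exp (-(k * ∫ s in (0:ℝ)..t, u k x s)))
    -- uniform convergence of `u_k` to the self-similar profile `f^{(U₀, δV₀)}(x/√t)`
    (hconv_u : TendstoUniformlyOn (fun (k : ℝ) (p : ℝ × ℝ) => u k p.1 p.2)
      (fun p => if p.2 = 0 then 0 else profile U₀ ι (p.1 / Real.sqrt p.2))
      atTop (Icc d₁ d₂ ×ˢ Icc 0 (d₂^2 / ι^2)))
    -- uniform convergence of `z_k(x,t) = ∫₀ᵗ u_k(x,s) ds` to `∫₀ᵗ f^{(U₀,δV₀)}(x/√s) ds`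
    (hconv_z : TendstoUniformlyOn (fun (k : ℝ) (p : ℝ × ℝ) => ∫ s in (0:ℝ)..p.2, u k p.1 s)
      (fun p => ∫ s in (0:ℝ)..p.2, profile U₀ ι (p.1 / Real.sqrt s))
      atTop (Icc d₁ d₂ ×ˢ Icc 0 (d₂^2 / ι^2))) :
    ∃ K > (0:ℝ), ∀ k > K, ∀ x ∈ Ioo d₁ d₂, ∀ t ∈ Ioo 0 (d₂^2 / ι^2),
      k * u k x t ^ m * v k x t - lam₁ * (k * u k x t * v k x t) - lam₂ * u k x t ≤ 0 := by
  have hε : 0 < lam₁ ^ (m - 1)⁻¹ := rpow_pos_of_pos hlam₁ _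
  obtain ⟨c, hc, hz_lb⟩ := exists_pos_le_integral_profile hU₀ hι hd₁ (half_pos hε)
  apply exists_pos_forall_gt_of_eventually_atTop
  filter_upwards [eventually_gt_atTop 0,
    Metric.tendstoUniformlyOn_iff.1 hconv_u _ (half_pos hε),
    Metric.tendstoUniformlyOn_iff.1 hconv_z _ (half_pos hc),
    eventually_mul_exp_neg_mul_le (half_pos hc) (U₀ ^ (m - 1) * V₀) hlam₂]
    with k hk hu_near hz_near hdecay x hx t ht
  have hxt : (x, t) ∈ Icc d₁ d₂ ×ˢ Icc 0 (d₂^2 / ι^2) :=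
    ⟨Ioo_subset_Icc_self hx, Ioo_subset_Icc_self ht⟩
  have htT : t ∈ Icc 0 T := ⟨ht.1.le, ht.2.le.trans hT⟩
  obtain ⟨hu, huU, hv⟩ := hbounds k hk x (Ioo_subset_Icc_self hx) t htT
  rcases le_or_gt (u k x t) (lam₁ ^ (m - 1)⁻¹) with hsmall | hlarge
  · exact reaction_nonpos_of_le_rpow hm hk.le hu hv hlam₁.le hlam₂.le hsmall
  have hprof : lam₁ ^ (m - 1)⁻¹ / 2 ≤ profile U₀ ι (x / √t) := by
    have := abs_lt.1 (hu_near (x, t) hxt)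
    simp only [if_neg ht.1.ne'] at this
    linarith
  have hz : c / 2 ≤ ∫ s in (0:ℝ)..t, u k x s := by
    have := abs_lt.1 (hz_near (x, t) hxt)
    linarith [hz_lb x hx.1.le t ht.1 hprof]
  refine reaction_nonpos_of_le_exp hm.le hk.le hu huU hv ?_ hlam₁.le hdecay
  rw [hv_formula k hk x (Ioo_subset_Icc_self hx) t htT]
  gcongr

/-- **Lemma (structural inequality for the reaction term).**
For the scaled one-dimensional system `∂ₜu = ∂ₓₓu − δk u v`, `∂ₜv = −k u v` on
`(d₁,d₂) × (0,T)` with `u(·,0) = 0`, `v(·,0) = V₀`, `0 ≤ u ≤ U₀`, the explicit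
formula `v = V₀ e^{−k z}`, `z(x,t) = ∫₀ᵗ u(x,s) ds`, and uniform convergence of `u_k`
to the self-similar profile and of `z_k` to its integral: for fixed `λ₁, λ₂ > 0`
there exists `K > 0` such that for all `k > K`,
`k uᵐ v − λ₁ k u v − λ₂ u ≤ 0` on `(d₁,d₂) × (0, d₂² ι⁻²)`. -/
theorem reaction_term_inequality
    (m δ U₀ V₀ d₁ d₂ ι T lam₁ lam₂ : ℝ)
    (hm : 1 < m) (hδ : 0 < δ) (hU₀ : 0 < U₀) (hV₀ : 0 < V₀)
    (hd₁ : 0 < d₁) (hd : d₁ < d₂) (hι : 0 < ι)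
    (hιeq : 2 * U₀ / (δ * V₀) = ι * ∫ s in (0:ℝ)..ι, Real.exp ((ι^2 - s^2)/4))
    (hT : d₂^2 / ι^2 ≤ T)
    (hlam₁ : 0 < lam₁) (hlam₂ : 0 < lam₂)
    (u v : ℝ → ℝ → ℝ → ℝ)
    -- nonnegative classical solutions of the scaled system with the stated data
    (hbounds : ∀ k > (0:ℝ), ∀ x ∈ Icc d₁ d₂, ∀ t ∈ Icc 0 T,
      0 ≤ u k x t ∧ u k x t ≤ U₀ ∧ 0 ≤ v k x t)
    (hu_cont : ∀ k > (0:ℝ),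
      ContinuousOn (fun p : ℝ × ℝ => u k p.1 p.2) (Icc d₁ d₂ ×ˢ Icc 0 T))
    (hu_pde : ∀ k > (0:ℝ), ∀ x ∈ Ioo d₁ d₂, ∀ t ∈ Ioo 0 T,
      HasDerivAt (fun s => u k x s)
        (deriv (fun y => deriv (fun z => u k z t) y) x - δ * k * u k x t * v k x t) t)
    (hv_pde : ∀ k > (0:ℝ), ∀ x ∈ Ioo d₁ d₂, ∀ t ∈ Ioo 0 T,
      HasDerivAt (fun s => v k x s) (-(k * u k x t * v k x t)) t)
    (hu_ic : ∀ k > (0:ℝ), ∀ x ∈ Icc d₁ d₂, u k x 0 = 0)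
    (hv_ic : ∀ k > (0:ℝ), ∀ x ∈ Icc d₁ d₂, v k x 0 = V₀)
    -- explicit integration of the `v`-equation
    (hv_formula : ∀ k > (0:ℝ), ∀ x ∈ Icc d₁ d₂, ∀ t ∈ Icc 0 T,
      v k x t = V₀ * Real.exp (-(k * ∫ s in (0:ℝ)..t, u k x s)))
    -- uniform convergence of `u_k` to the self-similar profile `f^{(U₀, δV₀)}(x/√t)`
    (hconv_u : TendstoUniformlyOn (fun (k : ℝ) (p : ℝ × ℝ) => u k p.1 p.2)
      (fun p => if p.2 = 0 then 0 else profile U₀ ι (p.1 / Real.sqrt p.2))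
      atTop (Icc d₁ d₂ ×ˢ Icc 0 (d₂^2 / ι^2)))
    -- uniform convergence of `z_k(x,t) = ∫₀ᵗ u_k(x,s) ds` to `∫₀ᵗ f^{(U₀,δV₀)}(x/√s) ds`
    (hconv_z : TendstoUniformlyOn (fun (k : ℝ) (p : ℝ × ℝ) => ∫ s in (0:ℝ)..p.2, u k p.1 s)
      (fun p => ∫ s in (0:ℝ)..p.2, profile U₀ ι (p.1 / Real.sqrt s))
      atTop (Icc d₁ d₂ ×ˢ Icc 0 (d₂^2 / ι^2))) :
    ∃ K > (0:ℝ), ∀ k > K, ∀ x ∈ Ioo d₁ d₂, ∀ t ∈ Ioo 0 (d₂^2 / ι^2),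
      k * u k x t ^ m * v k x t - lam₁ * (k * u k x t * v k x t) - lam₂ * u k x t ≤ 0 :=
  reaction_term_inequality_general m U₀ V₀ d₁ d₂ ι T lam₁ lam₂ hm hU₀ hV₀ hd₁ hι hT hlam₁ hlam₂ u v
    hbounds hv_formula hconv_u hconv_z
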